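/- For the Hamiltonian H = (px²+py²+pz²)/2 + k1(x²+y²+4z²) + k2/x² + k3/y² (the 1:1:2 oscillator with two centrifugal terms), the Runge–Lenz type function K_RL1 = −px·(z·px − x·pz) + 2k1 x² z − 2k2 z/x² satisfies {K_RL1, H} = 0. -/

import Mathlib

/-! Off the planes `x = 0`, `y = 0` both `H` and `K_RL1` are smooth with explicit gradients;
substituting them into the bracket, the `k1`-terms and the `k2`-terms cancel separately. -/

noncomputable section

/-- Phase space ℝ⁶ with coordinates (x,y,z,px,py,pz). -/
abbrev Pt := Fin 6 → ℝ

/-- Standard basis vector. -/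
def e (j : Fin 6) : Pt := Pi.single j 1

/-- Canonical Poisson bracket on ℝ⁶:
{F,G} = Σᵢ (∂F/∂qᵢ ∂G/∂pᵢ − ∂F/∂pᵢ ∂G/∂qᵢ). -/
def pb (F G : Pt → ℝ) (q : Pt) : ℝ :=
    (fderiv ℝ F q (e 0)) * (fderiv ℝ G q (e 3)) - (fderiv ℝ F q (e 3)) * (fderiv ℝ G q (e 0))
  + (fderiv ℝ F q (e 1)) * (fderiv ℝ G q (e 4)) - (fderiv ℝ F q (e 4)) * (fderiv ℝ G q (e 1))
  + (fderiv ℝ F q (e 2)) * (fderiv ℝ G q (e 5)) - (fderiv ℝ F q (e 5)) * (fderiv ℝ G q (e 2))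

/-- H = (px²+py²+pz²)/2 + k1(x²+y²+4z²) + k2/x² + k3/y². -/
def Ham (k1 k2 k3 : ℝ) (q : Pt) : ℝ :=
  (q 3 ^ 2 + q 4 ^ 2 + q 5 ^ 2) / 2 + k1 * (q 0 ^ 2 + q 1 ^ 2 + 4 * q 2 ^ 2)
    + k2 / q 0 ^ 2 + k3 / q 1 ^ 2

/-- K_RL1 = −px·(z px − x pz) + 2k1 x² z − 2k2 z/x². -/
def KRL1 (k1 k2 : ℝ) (q : Pt) : ℝ :=
  -(q 3 * (q 2 * q 3 - q 0 * q 5)) + 2 * k1 * q 0 ^ 2 * q 2 - 2 * k2 * q 2 / q 0 ^ 2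

open ContinuousLinearMap

def gradientForm (g : Pt) : Pt →L[ℝ] ℝ := ∑ i, g i • proj i

@[simp]
lemma gradientForm_apply (g v : Pt) : gradientForm g v = ∑ i, g i * v i := by
  simp [gradientForm]

lemma gradientForm_apply_e (g : Pt) (j : Fin 6) : gradientForm g (e j) = g j := by
  simp [e, Pi.single_apply]

lemma pb_eq_of_hasFDerivAt {F G : Pt → ℝ} {a b q : Pt}
    (hF : HasFDerivAt F (gradientForm a) q) (hG : HasFDerivAt G (gradientForm b) q) :
    pb F G q = a 0 * b 3 - a 3 * b 0 + a 1 * b 4 - a 4 * b 1 + a 2 * b 5 - a 5 * b 2 := by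
  simp only [pb, hF.fderiv, hG.fderiv, gradientForm_apply_e]

lemma hasFDerivAt_inv_sq_apply {ι : Type*} [Fintype ι] {q : ι → ℝ} (i : ι) (hq : q i ≠ 0) :
    HasFDerivAt (fun p : ι → ℝ => (p i ^ 2)⁻¹) ((-2 / q i ^ 3) • proj (R := ℝ) i) q := by
  have h := (hasDerivAt_inv (pow_ne_zero 2 hq)).comp_hasFDerivAt q
    ((hasFDerivAt_apply (𝕜 := ℝ) (F' := fun _ => ℝ) i q).pow 2)
  refine h.congr_fderiv (ext fun v => ?_)
  simp only [Nat.add_one_sub_one, pow_one, nsmul_eq_mul, Nat.cast_ofNat, neg_smul, neg_apply,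
    smul_apply, proj_apply, smul_eq_mul]
  field_simp

lemma hasFDerivAt_Ham (k1 k2 k3 : ℝ) {q : Pt} (hx : q 0 ≠ 0) (hy : q 1 ≠ 0) :
    HasFDerivAt (Ham k1 k2 k3)
      (gradientForm ![2 * k1 * q 0 - 2 * k2 / q 0 ^ 3, 2 * k1 * q 1 - 2 * k3 / q 1 ^ 3,
        8 * k1 * q 2, q 3, q 4, q 5]) q := by
  have hc (i : Fin 6) := hasFDerivAt_apply (𝕜 := ℝ) (F' := fun _ => ℝ) i q
  have h := (((((((hc 3).pow 2).add ((hc 4).pow 2)).add ((hc 5).pow 2)).mul_const 2⁻¹).add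
    (((((hc 0).pow 2).add ((hc 1).pow 2)).add (((hc 2).pow 2).const_mul 4)).const_mul k1)).add
    ((hasFDerivAt_inv_sq_apply 0 hx).const_mul k2)).add
    ((hasFDerivAt_inv_sq_apply 1 hy).const_mul k3)
  unfold Ham
  simp only [div_eq_mul_inv]
  refine h.congr_fderiv (ext fun v => ?_)
  simp only [nsmul_eq_mul, Nat.cast_ofNat, smul_add, add_apply, smul_apply, proj_apply,
    smul_eq_mul, gradientForm_apply, Fin.sum_univ_six, Matrix.cons_val_zero, Matrix.cons_val_one,
    Matrix.cons_val]
  field_simp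
  ring

lemma hasFDerivAt_KRL1 (k1 k2 : ℝ) {q : Pt} (hx : q 0 ≠ 0) :
    HasFDerivAt (KRL1 k1 k2)
      (gradientForm ![q 3 * q 5 + 4 * k1 * q 0 * q 2 + 4 * k2 * q 2 / q 0 ^ 3, 0,
        -q 3 ^ 2 + 2 * k1 * q 0 ^ 2 - 2 * k2 / q 0 ^ 2, q 0 * q 5 - 2 * q 2 * q 3, 0,
        q 0 * q 3]) q := by
  have hc (i : Fin 6) := hasFDerivAt_apply (𝕜 := ℝ) (F' := fun _ => ℝ) i q
  have h := (((hc 3).mul (((hc 2).mul (hc 3)).sub ((hc 0).mul (hc 5)))).neg.add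
    ((((hc 0).pow 2).const_mul (2 * k1)).mul (hc 2))).sub
    (((hc 2).const_mul (2 * k2)).mul (hasFDerivAt_inv_sq_apply 0 hx))
  unfold KRL1
  simp only [div_eq_mul_inv]
  refine h.congr_fderiv (ext fun v => ?_)
  simp only [Pi.sub_apply, Pi.mul_apply, nsmul_eq_mul, Nat.cast_ofNat, sub_apply,
    add_apply, neg_apply, smul_apply, proj_apply, smul_eq_mul, gradientForm_apply,
    Fin.sum_univ_six, Matrix.cons_val_zero, Matrix.cons_val_one, Matrix.cons_val]
  field_simp
  ring

theorem stmt7 (k1 k2 k3 : ℝ) :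
    ∀ q : Pt, q 0 ≠ 0 → q 1 ≠ 0 →
      pb (KRL1 k1 k2) (Ham k1 k2 k3) q = 0 := by
  intro q hx hy
  rw [pb_eq_of_hasFDerivAt (hasFDerivAt_KRL1 k1 k2 hx) (hasFDerivAt_Ham k1 k2 k3 hx hy)]
  simp only [Matrix.cons_val_zero, Matrix.cons_val_one, Matrix.cons_val]
  field_simp
  ring
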